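/- Fix b > 0 with r := 1/(2b) ∉ ℕ, set n := ⌊r⌋ + 1 and ρ := r − ⌊r⌋ ∈ (0,1). Let p_Y : [−b, 1+b] → ℝ be the piecewise constant function with p_Y(y) = r/(n+1) for y ∈ ⋃_{j=1}^{n+1} [(2j−3)/(2r), (2j−3+2ρ)/(2r)) and p_Y(y) = r/n for y ∈ ⋃_{j=1}^{n} [(2j−3+2ρ)/(2r), (2j−1)/(2r)). Then p_Y is a probability density and its differential entropy satisfies −∫_{−b}^{1+b} p_Y(y) log p_Y(y) dy = ρ·log(n+1) + (1−ρ)·log n + log(2b). Consequently, since the conditional differential entropy of the uniform noise equals log(2b), the corresponding mutual information equals ρ·log(n+1) + (1−ρ)·log n. -/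

import Mathlib

open MeasureTheory Set

/-- Endpoint sequence for the pieces. -/
noncomputable def aSeq (r ρ : ℝ) (k : ℕ) : ℝ :=
  ((k : ℝ) - 1 + (if Even k then 0 else 2 * ρ - 1)) / (2 * r)

lemma aSeq_even (r ρ : ℝ) (i : ℕ) :
    aSeq r ρ (2 * i) = (2 * (i : ℝ) - 1) / (2 * r) := by
  unfold aSeq
  rw [if_pos (even_two_mul i)]
  push_cast
  ring_nf

lemma aSeq_odd (r ρ : ℝ) (i : ℕ) :
    aSeq r ρ (2 * i + 1) = (2 * (i : ℝ) - 1 + 2 * ρ) / (2 * r) := by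
  have h : ¬ Even (2 * i + 1) := by simp [Nat.even_add_one, even_two_mul]
  unfold aSeq
  rw [if_neg h]
  push_cast
  ring_nf

lemma aSeq_step (r ρ : ℝ) (hr : r ≠ 0) (k : ℕ) :
    aSeq r ρ (k + 1) - aSeq r ρ k = if Even k then ρ / r else (1 - ρ) / r := by
  by_cases hk : Even k
  · have hk1 : ¬ Even (k + 1) := by simp [Nat.even_add_one, hk]
    simp only [aSeq, if_pos hk, if_neg hk1]
    push_cast
    field_simp
    ring
  · have hk1 : Even (k + 1) := by simpa [Nat.even_add_one] using hk
    simp only [aSeq, if_neg hk, if_pos hk1]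
    push_cast
    field_simp
    ring

lemma sum_even_odd (A B : ℝ) (m : ℕ) :
    ∑ k ∈ Finset.range (2 * m), (if Even k then A else B) = m * (A + B) := by
  induction m with
  | zero => simp
  | succ m ih =>
    have h : 2 * (m + 1) = (2 * m + 1) + 1 := by ring
    rw [h, Finset.sum_range_succ, Finset.sum_range_succ, ih]
    have h1 : ¬ Even (2 * m + 1) := by simp [Nat.even_add_one, even_two_mul]
    rw [if_pos (even_two_mul m), if_neg h1]
    push_cast
    ring

/-- Non-integer case: the piecewise constant output density taking
value `r/(n+1)` on the segments `[(2j−3)/(2r), (2j−3+2ρ)/(2r))`, `j = 1,…,n+1`, and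
`r/n` on `[(2j−3+2ρ)/(2r), (2j−1)/(2r))`, `j = 1,…,n`, is a probability density on
`[−b, 1+b]` with differential entropy `ρ·log(n+1) + (1−ρ)·log n + log(2b)`; hence
the corresponding mutual information equals `ρ·log(n+1) + (1−ρ)·log n`. -/
theorem stmt4 (b r : ℝ) (hb : 0 < b) (hr : r = 1 / (2 * b))
    (hrnat : ¬ ∃ k : ℕ, r = (k : ℝ))
    (n : ℕ) (hn : n = ⌊r⌋₊ + 1) (ρ : ℝ) (hρ : ρ = r - (⌊r⌋₊ : ℝ))
    (pY : ℝ → ℝ)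
    (h1 : ∀ j ∈ Finset.Icc 1 (n + 1),
      ∀ y ∈ Ico ((2 * (j : ℝ) - 3) / (2 * r)) ((2 * (j : ℝ) - 3 + 2 * ρ) / (2 * r)),
        pY y = r / ((n : ℝ) + 1))
    (h2 : ∀ j ∈ Finset.Icc 1 n,
      ∀ y ∈ Ico ((2 * (j : ℝ) - 3 + 2 * ρ) / (2 * r)) ((2 * (j : ℝ) - 1) / (2 * r)),
        pY y = r / (n : ℝ)) :
    (∫ y in (-b)..(1 + b), pY y) = 1 ∧
    (-∫ y in (-b)..(1 + b), pY y * Real.log (pY y))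
      = ρ * Real.log ((n : ℝ) + 1) + (1 - ρ) * Real.log (n : ℝ) + Real.log (2 * b) ∧
    (-∫ y in (-b)..(1 + b), pY y * Real.log (pY y)) - Real.log (2 * b)
      = ρ * Real.log ((n : ℝ) + 1) + (1 - ρ) * Real.log (n : ℝ) := by
  have hr0 : 0 < r := by rw [hr]; positivity
  have hrne : r ≠ 0 := ne_of_gt hr0
  have hb' : b = 1 / (2 * r) := by
    rw [hr]; field_simp
  have hρ0 : 0 < ρ := by
    have hle : (⌊r⌋₊ : ℝ) ≤ r := Nat.floor_le hr0.le
    have hne : r ≠ (⌊r⌋₊ : ℝ) := fun h => hrnat ⟨⌊r⌋₊, h⟩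
    rw [hρ]
    cases hle.lt_or_eq with
    | inl h => linarith
    | inr h => exact absurd h.symm hne
  have hρ1 : ρ < 1 := by
    have := Nat.lt_floor_add_one r
    rw [hρ]; linarith
  have hnR : (n : ℝ) = (⌊r⌋₊ : ℝ) + 1 := by rw [hn]; push_cast; ring
  have hnpos : (0 : ℝ) < (n : ℝ) := by
    have : (0:ℝ) ≤ (⌊r⌋₊ : ℝ) := Nat.cast_nonneg _
    rw [hnR]; linarith
  have hnne : (n : ℝ) ≠ 0 := ne_of_gt hnpos
  have hn1 : ((n : ℝ) + 1) ≠ 0 := by positivity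
  set a : ℕ → ℝ := aSeq r ρ with ha
  have hmono : ∀ k, a k ≤ a (k + 1) := by
    intro k
    have h := aSeq_step r ρ hrne k
    rw [← ha] at h
    by_cases hk : Even k
    · rw [if_pos hk] at h
      nlinarith [div_nonneg hρ0.le hr0.le]
    · rw [if_neg hk] at h
      nlinarith [div_nonneg (by linarith : (0:ℝ) ≤ 1 - ρ) hr0.le]
  have ha0 : a 0 = -b := by
    show aSeq r ρ 0 = -b
    simp [aSeq]
    rw [hb']
    field_simp
  have haN : a (2 * n + 1) = 1 + b := by
    rw [ha, aSeq_odd, hb', hnR, hρ]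
    field_simp
    ring
  -- value of pY on each piece
  have hval : ∀ k < 2 * n + 1, ∀ y ∈ Ico (a k) (a (k + 1)),
      pY y = if Even k then r / ((n : ℝ) + 1) else r / (n : ℝ) := by
    intro k hk y hy
    rcases Nat.even_or_odd k with hke | hko
    · obtain ⟨i, hi⟩ := hke
      have hk2 : k = 2 * i := by omega
      rw [if_pos (hk2 ▸ even_two_mul i)]
      rw [hk2] at hy
      rw [ha, aSeq_even, show 2 * i + 1 = 2 * i + 1 from rfl, aSeq_odd] at hy
      apply h1 (i + 1) (by simp [Finset.mem_Icc]; omega)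
      have e1 : (2 * ((i:ℕ) + 1 : ℕ) - 3 : ℝ) / (2 * r) = (2 * (i : ℝ) - 1) / (2 * r) := by
        push_cast; ring_nf
      have e2 : (2 * ((i:ℕ) + 1 : ℕ) - 3 + 2 * ρ : ℝ) / (2 * r)
          = (2 * (i : ℝ) - 1 + 2 * ρ) / (2 * r) := by
        push_cast; ring_nf
      rw [show ((i + 1 : ℕ) : ℝ) = ((i : ℝ) + 1) by push_cast; ring]
      have e1' : (2 * ((i : ℝ) + 1) - 3) / (2 * r) = (2 * (i : ℝ) - 1) / (2 * r) := by ring_nf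
      have e2' : (2 * ((i : ℝ) + 1) - 3 + 2 * ρ) / (2 * r)
          = (2 * (i : ℝ) - 1 + 2 * ρ) / (2 * r) := by ring_nf
      rw [e1', e2']
      exact hy
    · obtain ⟨i, hi⟩ := hko
      have hkne : ¬ Even k := by subst hi; simp [Nat.even_add_one, even_two_mul]
      rw [if_neg hkne]
      have hin : i < n := by omega
      rw [hi] at hy
      rw [ha, aSeq_odd, show 2 * i + 1 + 1 = 2 * (i + 1) from by ring, aSeq_even] at hy
      apply h2 (i + 1) (by simp [Finset.mem_Icc]; omega)
      rw [show ((i + 1 : ℕ) : ℝ) = ((i : ℝ) + 1) by push_cast; ring]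
      have e1' : (2 * ((i : ℝ) + 1) - 3 + 2 * ρ) / (2 * r)
          = (2 * (i : ℝ) - 1 + 2 * ρ) / (2 * r) := by ring_nf
      have e2' : (2 * ((i : ℝ) + 1) - 1) / (2 * r) = (2 * ((i : ℝ) + 1) - 1) / (2 * r) := rfl
      rw [e1']
      have : ((i + 1 : ℕ) : ℝ) = (i : ℝ) + 1 := by push_cast; ring
      rw [this] at hy
      exact hy
  -- the key computation for an arbitrary post-composition F
  have key : ∀ F : ℝ → ℝ, (∫ y in (-b)..(1 + b), F (pY y))
      = ((n : ℝ) + 1) * (F (r / ((n : ℝ) + 1)) * (ρ / r))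
        + (n : ℝ) * (F (r / (n : ℝ)) * ((1 - ρ) / r)) := by
    intro F
    have hae : ∀ k < 2 * n + 1, (fun y => F (pY y))
        =ᵐ[volume.restrict (Ioc (a k) (a (k + 1)))]
        (fun _ => F (if Even k then r / ((n : ℝ) + 1) else r / (n : ℝ))) := by
      intro k hk
      have hne : ∀ᵐ y ∂(volume.restrict (Ioc (a k) (a (k + 1)))), y ≠ a (k + 1) := by
        apply ae_restrict_of_ae
        rw [ae_iff]
        have hs : {y : ℝ | ¬ y ≠ a (k + 1)} = {a (k + 1)} := by ext y; simp
        rw [hs, Real.volume_singleton]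
      filter_upwards [ae_restrict_mem measurableSet_Ioc, hne] with y hy hy'
      have hmem : y ∈ Ico (a k) (a (k + 1)) := ⟨le_of_lt hy.1, lt_of_le_of_ne hy.2 hy'⟩
      rw [hval k hk y hmem]
    have hint : ∀ k < 2 * n + 1, IntervalIntegrable (fun y => F (pY y)) volume (a k) (a (k + 1)) := by
      intro k hk
      rw [intervalIntegrable_iff_integrableOn_Ioc_of_le (hmono k)]
      exact (integrableOn_const measure_Ioc_lt_top.ne).congr (hae k hk).symm
    have hpiece : ∀ k < 2 * n + 1, (∫ y in a k..a (k + 1), F (pY y))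
        = (a (k + 1) - a k) * F (if Even k then r / ((n : ℝ) + 1) else r / (n : ℝ)) := by
      intro k hk
      rw [intervalIntegral.integral_of_le (hmono k), integral_congr_ae (hae k hk)]
      rw [setIntegral_const]
      rw [measureReal_def, Real.volume_Ioc, ENNReal.toReal_ofReal (sub_nonneg.2 (hmono k))]
      rw [smul_eq_mul]
    calc (∫ y in (-b)..(1 + b), F (pY y))
        = ∫ y in (a 0)..(a (2 * n + 1)), F (pY y) := by rw [ha0, haN]
      _ = ∑ k ∈ Finset.range (2 * n + 1), ∫ y in a k..a (k + 1), F (pY y) :=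
          (intervalIntegral.sum_integral_adjacent_intervals
            (fun k hk => hint k hk)).symm
      _ = ∑ k ∈ Finset.range (2 * n + 1),
          (if Even k then F (r / ((n : ℝ) + 1)) * (ρ / r)
            else F (r / (n : ℝ)) * ((1 - ρ) / r)) := by
          apply Finset.sum_congr rfl
          intro k hk
          rw [hpiece k (Finset.mem_range.1 hk)]
          have hstep := aSeq_step r ρ hrne k
          rw [← ha] at hstep
          by_cases h : Even k <;> simp only [if_pos, if_neg, h, if_true, if_false] at hstep ⊢ <;>
            rw [hstep] <;> ring
      _ = ((n : ℝ) + 1) * (F (r / ((n : ℝ) + 1)) * (ρ / r))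
            + (n : ℝ) * (F (r / (n : ℝ)) * ((1 - ρ) / r)) := by
          rw [Finset.sum_range_succ, sum_even_odd, if_pos (even_two_mul n)]
          ring
  -- mass
  have hmass : (∫ y in (-b)..(1 + b), pY y) = 1 := by
    have h := key id
    simp only [id_eq] at h
    rw [h]
    field_simp
    ring
  -- entropy
  have hent : (∫ y in (-b)..(1 + b), pY y * Real.log (pY y))
      = ρ * Real.log (r / ((n : ℝ) + 1)) + (1 - ρ) * Real.log (r / (n : ℝ)) := by
    have h := key (fun t => t * Real.log t)
    rw [h]
    field_simp
  have hlogr : Real.log r = -Real.log (2 * b) := by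
    rw [hr, one_div, Real.log_inv]
  have hent2 : (-∫ y in (-b)..(1 + b), pY y * Real.log (pY y))
      = ρ * Real.log ((n : ℝ) + 1) + (1 - ρ) * Real.log (n : ℝ) + Real.log (2 * b) := by
    rw [hent, Real.log_div hrne hn1, Real.log_div hrne hnne, hlogr]
    ring
  exact ⟨hmass, hent2, by rw [hent2]; ring⟩
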